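/- arXiv:2006.04439 — 4 statements merged into one kernel-verified Lean document; each statement's English description precedes it below -/
import Mathlib

section
/- Let x: [0,T] → ℝ be a solution of dx/dt = -(1/τ + f(t))·x + f(t)·A, where τ > 0, A ∈ ℝ, and f: [0,T] → ℝ satisfies 0 ≤ f(t) for all t. If x(0) ∈ [min(0,A), max(0,A)], then x(t) ∈ [min(0,A), max(0,A)] for all t ∈ [0,T]. -/
/-!
On the boundary `x = max 0 A` the vector field `-(1/τ + f)·x + f·A = -x/τ + f·(A - x)` is
nonpositive, and on `x = min 0 A` it is nonnegative, since `1/τ ≥ 0` and `f ≥ 0` (the lower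
barrier is the upper one for `-x`, which solves the same equation with `-A` in place of `A`). A function whose
derivative has the right sign wherever it reaches a barrier cannot cross it: this is Mathlib's
fencing theorem, applied to barriers tilted upwards by an arbitrarily small slope.
-/

open Set

theorem le_of_deriv_right_nonpos_of_le {y y' : ℝ → ℝ} {a b M : ℝ}
    (hy : ContinuousOn y (Icc a b))
    (hy' : ∀ s ∈ Ico a b, HasDerivWithinAt y (y' s) (Ici s) s)
    (hbound : ∀ s ∈ Ico a b, M ≤ y s → y' s ≤ 0) (ha : y a ≤ M) :
    ∀ ⦃t⦄, t ∈ Icc a b → y t ≤ M := by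
  intro t ht
  have htilted : ∀ ε > 0, y t ≤ M + ε * (t - a) := fun ε hε =>
    image_le_of_deriv_right_lt_deriv_boundary (B := fun s => M + ε * (s - a)) (B' := fun _ => ε)
      hy hy' (by simpa using ha)
      (fun s => by simpa using ((hasDerivAt_id s).sub_const a).const_mul ε |>.const_add M)
      (fun s hs hys => (hbound s hs (by nlinarith [hs.1])).trans_lt hε) ht
  refine le_of_forall_pos_le_add fun δ hδ => ?_
  have hta : 0 ≤ t - a := sub_nonneg.2 ht.1
  calc y t ≤ M + δ / (t - a + 1) * (t - a) := htilted _ (by positivity)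
    _ ≤ M + δ := by
      gcongr
      rw [div_mul_eq_mul_div, div_le_iff₀ (by positivity)]
      nlinarith

theorem relaxation_solution_le {k C M t₀ T : ℝ} {g y : ℝ → ℝ} (hk : 0 ≤ k) (hM : 0 ≤ M)
    (hCM : C ≤ M) (hg : ∀ t ∈ Icc t₀ T, 0 ≤ g t)
    (hy : ∀ t ∈ Icc t₀ T, HasDerivAt y (-(k + g t) * y t + g t * C) t) (h₀ : y t₀ ≤ M) :
    ∀ t ∈ Icc t₀ T, y t ≤ M := by
  refine le_of_deriv_right_nonpos_of_le (fun t ht => (hy t ht).continuousAt.continuousWithinAt)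
    (fun t ht => (hy t (Ico_subset_Icc_self ht)).hasDerivWithinAt) (fun t ht hMy => ?_) h₀
  have hgt := hg t (Ico_subset_Icc_self ht)
  have hdecay : 0 ≤ k * y t := mul_nonneg hk (hM.trans hMy)
  have hpull : 0 ≤ g t * (y t - C) := mul_nonneg hgt (by linarith)
  linarith

theorem stmt_1_general (T τ A : ℝ) (hτ : 0 < τ)
    (f : ℝ → ℝ)
    (hf : ∀ t ∈ Set.Icc (0 : ℝ) T, 0 ≤ f t)
    (x : ℝ → ℝ)
    (hx : ∀ t ∈ Set.Icc (0 : ℝ) T,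
      HasDerivAt x (-(1 / τ + f t) * x t + f t * A) t)
    (h0 : x 0 ∈ Set.Icc (min 0 A) (max 0 A)) :
    ∀ t ∈ Set.Icc (0 : ℝ) T, x t ∈ Set.Icc (min 0 A) (max 0 A) := by
  have hk : 0 ≤ 1 / τ := by positivity
  have hneg : ∀ t ∈ Icc (0 : ℝ) T,
      HasDerivAt (-x) (-(1 / τ + f t) * (-x) t + f t * -A) t := fun t ht =>
    (hx t ht).neg.congr_deriv (by simp only [Pi.neg_apply]; ring)
  intro t ht
  constructor
  · have := relaxation_solution_le hk (neg_nonneg.2 (min_le_left 0 A))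
      (neg_le_neg (min_le_right 0 A)) hf hneg (neg_le_neg h0.1) t ht
    exact le_of_neg_le_neg this
  · exact relaxation_solution_le hk (le_max_left 0 A) (le_max_right 0 A) hf hx h0.2 t ht

/-- Invariance of the interval [min(0,A), max(0,A)] for the LTC scalar ODE
`x' = -(1/τ + f(t))·x + f(t)·A` with nonnegative continuous `f`. -/
theorem stmt_1 (T τ A : ℝ) (hT : 0 ≤ T) (hτ : 0 < τ)
    (f : ℝ → ℝ) (hfc : ContinuousOn f (Set.Icc 0 T))
    (hf : ∀ t ∈ Set.Icc (0 : ℝ) T, 0 ≤ f t)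
    (x : ℝ → ℝ)
    (hx : ∀ t ∈ Set.Icc (0 : ℝ) T,
      HasDerivAt x (-(1 / τ + f t) * x t + f t * A) t)
    (h0 : x 0 ∈ Set.Icc (min 0 A) (max 0 A)) :
    ∀ t ∈ Set.Icc (0 : ℝ) T, x t ∈ Set.Icc (min 0 A) (max 0 A) :=
  stmt_1_general T τ A hτ f hf x hx h0
end

section
/- Let f: ℝ → ℝ satisfy 0 < f(u) < 1 for all u. For the LTC neuron dx/dt = -(1/τ + W·f(u(t)))x + W·f(u(t))·A with τ > 0 and W > 0, the instantaneous time constant τ_sys(t) = τ/(1 + τ·W·f(u(t))) satisfies τ/(1 + τW) ≤ τ_sys(t) ≤ τ for all t. -/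
lemma div_one_add_mul_mem_Icc {a c x : ℝ} (ha : 0 ≤ a) (hc : 0 ≤ c) (hx₀ : 0 ≤ x) (hx₁ : x ≤ 1) :
    a / (1 + c * x) ∈ Set.Icc (a / (1 + c)) a := by
  have hcx : 0 ≤ c * x := mul_nonneg hc hx₀
  refine ⟨div_le_div_of_nonneg_left ha (by positivity) ?_, div_le_self ha (by linarith)⟩
  linarith [mul_le_of_le_one_right hc hx₁]

/-- The instantaneous time constant `τ/(1 + τ·W·f(u(t)))` of the LTC neuron
is bounded: `τ/(1+τW) ≤ τ_sys(t) ≤ τ`. -/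
theorem stmt_3 (τ W : ℝ) (hτ : 0 < τ) (hW : 0 < W)
    (f : ℝ → ℝ) (hf : ∀ u : ℝ, 0 < f u ∧ f u < 1)
    (u : ℝ → ℝ) :
    ∀ t : ℝ,
      τ / (1 + τ * W) ≤ τ / (1 + τ * W * f (u t)) ∧
        τ / (1 + τ * W * f (u t)) ≤ τ := fun t =>
  div_one_add_mul_mem_Icc hτ.le (mul_pos hτ hW).le (hf (u t)).1.le (hf (u t)).2.le
end

section
/- Let X be a centered Gaussian random vector in ℝ^k with diagonal covariance matrix, and let μ ∈ ℝ^k be a constant vector. Then E[‖X - μ‖] ≥ E[‖X‖]. -/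
/-!
A centered Gaussian vector with independent coordinates is symmetric: `X` and `-X` have the same
law. Hence `E‖X - μ‖ = E‖-X - μ‖`, and since `2X = (X - μ) - (-X - μ)` the triangle inequality
gives `‖X‖ ≤ (‖X - μ‖ + ‖-X - μ‖) / 2`; taking expectations yields `E‖X‖ ≤ E‖X - μ‖`.
-/

open MeasureTheory ProbabilityTheory
open scoped NNReal

section

variable {Ω : Type*} [MeasurableSpace Ω] {P : Measure Ω}

lemma norm_le_half_norm_sub_add_norm_neg_sub {E : Type*} [SeminormedAddCommGroup E]
    [NormedSpace ℝ E] (x c : E) : ‖x‖ ≤ (‖x - c‖ + ‖-x - c‖) / 2 := by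
  have h := norm_sub_le (x - c) (-x - c)
  rw [show x - c - (-x - c) = (2 : ℝ) • x by module, norm_smul, Real.norm_two] at h
  linarith

theorem integral_norm_le_integral_norm_sub_of_identDistrib_neg {E : Type*}
    [NormedAddCommGroup E] [NormedSpace ℝ E] [MeasurableSpace E] [OpensMeasurableSpace E]
    [IsFiniteMeasure P]
    {X : Ω → E} (hX : IdentDistrib X (-X) P P) (c : E) :
    ∫ ω, ‖X ω‖ ∂P ≤ ∫ ω, ‖X ω - c‖ ∂P := by
  by_cases hint : Integrable (fun ω ↦ ‖X ω‖) P
  swap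
  · rw [integral_undef hint]
    exact integral_nonneg fun _ ↦ norm_nonneg _
  have hsymm : IdentDistrib (fun ω ↦ ‖X ω - c‖) (fun ω ↦ ‖-X ω - c‖) P P :=
    hX.comp (continuous_norm.comp (continuous_sub_right c)).measurable
  have hsub : Integrable (fun ω ↦ ‖X ω - c‖) P := by
    refine (hint.add (integrable_const ‖c‖)).mono' ?_ (.of_forall fun ω ↦ ?_)
    · exact (continuous_norm.comp (continuous_sub_right c)).measurable.comp_aemeasurable
        hX.aemeasurable_fst |>.aestronglyMeasurable
    · simpa using norm_sub_le (X ω) c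
  have hneg_sub : Integrable (fun ω ↦ ‖-X ω - c‖) P := hsymm.integrable_snd hsub
  calc ∫ ω, ‖X ω‖ ∂P ≤ ∫ ω, (‖X ω - c‖ + ‖-X ω - c‖) / 2 ∂P :=
        integral_mono hint ((hsub.add hneg_sub).div_const 2)
          fun ω ↦ norm_le_half_norm_sub_add_norm_neg_sub (X ω) c
    _ = ∫ ω, ‖X ω - c‖ ∂P := by
        rw [integral_div, integral_add hsub hneg_sub, ← hsymm.integral_eq]
        ring

lemma identDistrib_neg_of_map_eq_gaussianReal {Y : Ω → ℝ} (hY : Measurable Y) {v : ℝ≥0}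
    (h : P.map Y = gaussianReal 0 v) : IdentDistrib Y (-Y) P P where
  aemeasurable_fst := hY.aemeasurable
  aemeasurable_snd := hY.neg.aemeasurable
  map_eq := by
    rw [show -Y = Neg.neg ∘ Y from rfl, ← Measure.map_map measurable_neg hY, h,
      gaussianReal_map_neg, neg_zero]

lemma identDistrib_neg_pi_of_iIndepFun [IsProbabilityMeasure P] {ι : Type*} [Fintype ι]
    {β : ι → Type*} [∀ i, MeasurableSpace (β i)] [∀ i, Neg (β i)] [∀ i, MeasurableNeg (β i)]
    {f : ∀ i, Ω → β i} (hind : iIndepFun f P) (hsymm : ∀ i, IdentDistrib (f i) (-f i) P P) :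
    IdentDistrib (fun ω i ↦ f i ω) (fun ω i ↦ -f i ω) P P where
  aemeasurable_fst := aemeasurable_pi_lambda _ fun i ↦ (hsymm i).aemeasurable_fst
  aemeasurable_snd := aemeasurable_pi_lambda _ fun i ↦ (hsymm i).aemeasurable_snd
  map_eq := by
    have hneg : iIndepFun (fun i ↦ -f i) P := hind.comp (fun _ ↦ Neg.neg) fun _ ↦ measurable_neg
    rw [hind.map_fun_eq_pi_map fun i ↦ (hsymm i).aemeasurable_fst]
    refine Eq.trans ?_ (hneg.map_fun_eq_pi_map fun i ↦ (hsymm i).aemeasurable_snd).symm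
    exact congrArg Measure.pi (funext fun i ↦ (hsymm i).map_eq)

end

/-- Norm and translation: for a centered Gaussian vector `X` in ℝ^k with
independent coordinates (diagonal covariance) and a constant vector `μ`,
`E[‖X - μ‖] ≥ E[‖X‖]`. -/
theorem stmt_8 {Ω : Type*} [MeasureSpace Ω] [IsProbabilityMeasure (ℙ : Measure Ω)]
    (k : ℕ) (v : Fin k → ℝ≥0)
    (X : Ω → EuclideanSpace ℝ (Fin k))
    (hmeas : ∀ i, Measurable fun ω => X ω i)
    (hgauss : ∀ i, Measure.map (fun ω => X ω i) ℙ = gaussianReal 0 (v i))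
    (hindep : iIndepFun
      (fun i ω => X ω i) ℙ)
    (μ : EuclideanSpace ℝ (Fin k)) :
    ∫ ω, ‖X ω‖ ∂ℙ ≤ ∫ ω, ‖X ω - μ‖ ∂ℙ := by
  have hcoord : ∀ i, IdentDistrib (fun ω ↦ X ω i) (-fun ω ↦ X ω i) ℙ ℙ := fun i ↦
    identDistrib_neg_of_map_eq_gaussianReal (hmeas i) (hgauss i)
  have hX : IdentDistrib X (-X) ℙ ℙ :=
    (identDistrib_neg_pi_of_iIndepFun hindep hcoord).comp (WithLp.measurable_toLp 2 _)
  exact integral_norm_le_integral_norm_sub_of_identDistrib_neg hX μ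
end

section
/- Let F: ℝⁿ → ℝⁿ be a bounded, nonnegative (coordinatewise) C¹ map with 0 ≤ F_i(x) ≤ M for all i and x, let τ > 0 and A ∈ ℝ with A ≥ 0. Then for any solution x(t) of ẋ_i = -(1/τ + F_i(x))x_i + A·F_i(x) with x(0) = x₀, each coordinate satisfies min(x_i(0), τAM/(1+τM), 0) ≤ x_i(t) ≤ max(x_i(0), τAM/(1+τM)) for all t ≥ 0 in the domain of the solution; consequently the solution is bounded and extends to a unique solution on [0, ∞). -/
/-!
On each face of a box `∏ i, [lo i, hi i]` with `lo ≤ 0` and `hi i ≥ τAM/(1+τM)` the LTC field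
points inward: `-(1/τ + φ) v + A φ` is `≥ 0` for `v ≤ 0`, and `≤ 0` for `v ≥ τAM/(1+τM)` because
`τAφ/(1+τφ) ≤ τAM/(1+τM)` for `0 ≤ φ ≤ M`. A fencing argument then keeps each coordinate of a
solution in the box, which gives the bounds.

For global existence, compose the field with the 1-Lipschitz retraction `y ↦ lo ⊔ (y ⊓ hi)` onto the
box. The result is globally Lipschitz and bounded, so it has a solution on all of `ℝ`; fencing
keeps that solution in the box for `t ≥ 0`, and there the clamp is the identity. Uniqueness holds
because the `C¹` field is Lipschitz on the compact box, which contains every solution.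
-/

open Set
open scoped NNReal

theorem lipschitzWith_pi {ι α : Type*} [Fintype ι] {β : ι → Type*} [PseudoEMetricSpace α]
    [∀ i, PseudoEMetricSpace (β i)] {f : α → ∀ i, β i} {K : ℝ≥0}
    (hf : ∀ i, LipschitzWith K fun a => f a i) : LipschitzWith K f :=
  fun x y => edist_pi_le_iff.2 fun i => hf i x y

theorem image_le_of_deriv_right_nonpos_of_le {u u' : ℝ → ℝ} {a b c : ℝ}
    (hu : ContinuousOn u (Icc a b))
    (hu' : ∀ t ∈ Ico a b, HasDerivWithinAt u (u' t) (Ici t) t)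
    (ha : u a ≤ c) (hc : ∀ t ∈ Ico a b, c ≤ u t → u' t ≤ 0) :
    ∀ ⦃t⦄, t ∈ Icc a b → u t ≤ c := by
  intro t ht
  have hfence : ∀ ε > 0, u t ≤ c + ε * (1 + (t - a)) := by
    intro ε hε
    refine image_le_of_deriv_right_lt_deriv_boundary (B := fun s => c + ε * (1 + (s - a)))
      (B' := fun _ => ε) hu hu' (by simpa using ha.trans (le_add_of_nonneg_right hε.le))
      (fun s => by simpa using (((hasDerivAt_id s).sub_const a).const_add 1).const_mul ε
        |>.const_add c) (fun s hs hus => ?_) ht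
    have : c ≤ u s := by rw [hus]; nlinarith [hs.1]
    exact (hc s hs this).trans_lt hε
  have hpos : 0 < 1 + (t - a) := by linarith [ht.1]
  refine le_of_forall_pos_le_add fun δ hδ => ?_
  simpa [div_mul_cancel₀ δ hpos.ne'] using hfence (δ / (1 + (t - a))) (by positivity)

theorem image_mem_Icc_of_hasDerivAt {u u' : ℝ → ℝ} {a b lo hi : ℝ}
    (hu : ∀ t ∈ Icc a b, HasDerivAt u (u' t) t) (ha : u a ∈ Icc lo hi)
    (hlo : ∀ t ∈ Icc a b, u t ≤ lo → 0 ≤ u' t) (hhi : ∀ t ∈ Icc a b, hi ≤ u t → u' t ≤ 0) :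
    ∀ t ∈ Icc a b, u t ∈ Icc lo hi := by
  intro t ht
  have hcont := HasDerivAt.continuousOn hu
  refine ⟨?_, image_le_of_deriv_right_nonpos_of_le hcont
    (fun s hs => (hu s (Ico_subset_Icc_self hs)).hasDerivWithinAt) ha.2
    (fun s hs => hhi s (Ico_subset_Icc_self hs)) ht⟩
  have := image_le_of_deriv_right_nonpos_of_le (u := -u) (u' := -u') hcont.neg
    (fun s hs => (hu s (Ico_subset_Icc_self hs)).hasDerivWithinAt.neg) (neg_le_neg ha.1)
    (fun s hs h => neg_nonpos.2 (hlo s (Ico_subset_Icc_self hs) (neg_le_neg_iff.1 h))) ht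
  exact neg_le_neg_iff.1 this

section GlobalSolution

variable {E : Type*} [NormedAddCommGroup E] [NormedSpace ℝ E]

theorem exists_forall_hasDerivAt_of_lipschitzWith [CompleteSpace E] {g : E → E} {K L : ℝ≥0}
    (hg : LipschitzWith K g) (hL : ∀ y, ‖g y‖ ≤ L) (x₀ : E) :
    ∃ X : ℝ → E, X 0 = x₀ ∧ ∀ t, HasDerivAt X (g (X t)) t := by
  have hlocal (a : ℝ≥0) : ∃ γ : ℝ → E, γ 0 = x₀ ∧
      ∀ t ∈ Icc (-a : ℝ) a, HasDerivWithinAt γ (g (γ t)) (Icc (-a : ℝ) a) t :=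
    (IsPicardLindelof.of_time_independent (tmin := -a) (tmax := a) (t₀ := ⟨0, by simp⟩)
      (a := L * a) (r := 0) (fun y _ => hL y) hg.lipschitzOnWith (by simp)
      ).exists_eq_forall_mem_Icc_hasDerivWithinAt₀
  choose γ hγ0 hγ using hlocal
  have hγ' (a : ℝ≥0) (t : ℝ) (ht : t ∈ Ioo (-a : ℝ) a) : HasDerivAt (γ a) (g (γ a t)) t :=
    (hγ a t (Ioo_subset_Icc_self ht)).hasDerivAt (Icc_mem_nhds ht.1 ht.2)
  have hagree (a b : ℝ≥0) (hab : a ≤ b) : EqOn (γ a) (γ b) (Ioo (-a : ℝ) a) := by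
    intro t ht
    have hab' : Ioo (-a : ℝ) a ⊆ Ioo (-b : ℝ) b :=
      Ioo_subset_Ioo (neg_le_neg (NNReal.coe_le_coe.2 hab)) (NNReal.coe_le_coe.2 hab)
    exact ODE_solution_unique_of_mem_Ioo (v := fun _ => g) (s := fun _ => univ)
      (fun _ _ => hg.lipschitzOnWith) ⟨by linarith [ht.1, ht.2], by linarith [ht.1, ht.2]⟩
      (fun s hs => ⟨hγ' a s hs, trivial⟩) (fun s hs => ⟨hγ' b s (hab' hs), trivial⟩)
      ((hγ0 a).trans (hγ0 b).symm) ht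
  have hmem (t : ℝ) : t ∈ Ioo (-(‖t‖₊ + 1 : ℝ≥0) : ℝ) (‖t‖₊ + 1 : ℝ≥0) := by
    rw [NNReal.coe_add, coe_nnnorm, Real.norm_eq_abs, NNReal.coe_one, mem_Ioo, ← abs_lt]
    exact lt_add_one _
  let X : ℝ → E := fun t => γ (‖t‖₊ + 1) t
  have hX (a : ℝ≥0) : EqOn X (γ a) (Ioo (-a : ℝ) a) := by
    intro t ht
    rcases le_total (‖t‖₊ + 1) a with h | h
    · exact hagree _ _ h (hmem t)
    · exact (hagree _ _ h ht).symm
  refine ⟨X, hγ0 _, fun t => ?_⟩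
  have ht := hmem t
  rw [hX _ ht]
  exact (hγ' _ t ht).congr_of_eventuallyEq
    (Filter.eventuallyEq_of_mem (Ioo_mem_nhds ht.1 ht.2) (hX _))

theorem exists_forall_hasDerivAt_comp_of_isCompact [CompleteSpace E] {f : E → E}
    (hf : LocallyLipschitz f) {K : Set E} (hK : IsCompact K) {r : E → E} {L : ℝ≥0}
    (hr : LipschitzWith L r) (hrK : ∀ y, r y ∈ K) (x₀ : E) :
    ∃ X : ℝ → E, X 0 = x₀ ∧ ∀ t, HasDerivAt X (f (r (X t))) t := by
  obtain ⟨Kf, hKf⟩ := hf.locallyLipschitzOn.exists_lipschitzOnWith_of_compact hK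
  obtain ⟨C, hC⟩ := hK.exists_bound_of_continuousOn hf.continuous.continuousOn
  have hlip : LipschitzWith (Kf * L) (f ∘ r) :=
    lipschitzOnWith_univ.1 (hKf.comp hr.lipschitzOnWith fun y _ => hrK y)
  exact exists_forall_hasDerivAt_of_lipschitzWith hlip
    (fun y => (hC _ (hrK y)).trans (Real.le_coe_toNNReal C)) x₀

theorem eqOn_Ici_of_locallyLipschitz {v : E → E} (hv : LocallyLipschitz v) {K : Set E}
    (hK : IsCompact K) {x y : ℝ → E} (hx : ∀ t ≥ 0, HasDerivAt x (v (x t)) t ∧ x t ∈ K)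
    (hy : ∀ t ≥ 0, HasDerivAt y (v (y t)) t ∧ y t ∈ K) (h0 : x 0 = y 0) :
    EqOn x y (Ici 0) := by
  obtain ⟨Kv, hKv⟩ := hv.locallyLipschitzOn.exists_lipschitzOnWith_of_compact hK
  intro t ht
  exact ODE_solution_unique_of_mem_Icc_right (v := fun _ => v) (s := fun _ => K)
    (fun _ _ => hKv) (HasDerivAt.continuousOn fun s hs => (hx s hs.1).1)
    (fun s hs => (hx s hs.1).1.hasDerivWithinAt) (fun s hs => (hx s hs.1).2)
    (HasDerivAt.continuousOn fun s hs => (hy s hs.1).1)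
    (fun s hs => (hy s hs.1).1.hasDerivWithinAt) (fun s hs => (hy s hs.1).2) h0
    ⟨ht, le_rfl⟩

end GlobalSolution

section LTC

variable {ι : Type*} [Fintype ι]

noncomputable def ltcField (F : (ι → ℝ) → ι → ℝ) (τ A : ℝ) (y : ι → ℝ) : ι → ℝ :=
  fun i => -(1 / τ + F y i) * y i + A * F y i

theorem contDiff_ltcField {F : (ι → ℝ) → ι → ℝ} {n : WithTop ℕ∞} (hF : ContDiff ℝ n F)
    (τ A : ℝ) : ContDiff ℝ n (ltcField F τ A) := by
  refine contDiff_pi.2 fun i => ?_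
  have hFi : ContDiff ℝ n fun y => F y i := contDiff_pi.1 hF i
  have hyi : ContDiff ℝ n fun y : ι → ℝ => y i := contDiff_apply ℝ ℝ i
  exact ((contDiff_const.add hFi).neg.mul hyi).add (contDiff_const.mul hFi)

theorem ltc_rate_nonpos {τ A M φ v : ℝ} (hτ : 0 < τ) (hA : 0 ≤ A) (hφ : φ ∈ Icc 0 M)
    (hv : τ * A * M / (1 + τ * M) ≤ v) : -(1 / τ + φ) * v + A * φ ≤ 0 := by
  obtain ⟨hφ0, hφM⟩ := hφ
  have hden : 0 < 1 + τ * M := by nlinarith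
  rw [div_le_iff₀ hden] at hv
  -- `φ ↦ τ A φ / (1 + τ φ)` is monotone
  have hmono : τ * A * φ * (1 + τ * M) ≤ τ * A * M * (1 + τ * φ) := by
    nlinarith [mul_nonneg (mul_nonneg hτ.le hA) (sub_nonneg.2 hφM)]
  have key : τ * A * φ ≤ (1 + τ * φ) * v := by
    refine le_of_mul_le_mul_right ?_ hden
    nlinarith [mul_le_mul_of_nonneg_right hv (by positivity : 0 ≤ 1 + τ * φ)]
  have : A * φ ≤ (1 / τ + φ) * v := by
    rw [show (1 / τ + φ) * v = (1 + τ * φ) * v / τ by field_simp, le_div_iff₀ hτ]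
    linarith
  linarith

theorem ltc_rate_nonneg {τ A φ v : ℝ} (hτ : 0 < τ) (hA : 0 ≤ A) (hφ : 0 ≤ φ) (hv : v ≤ 0) :
    0 ≤ -(1 / τ + φ) * v + A * φ := by
  have : 0 ≤ 1 / τ + φ := by positivity
  nlinarith [mul_nonneg hA hφ]

theorem ltc_coord_mem_Icc {τ A M a b lo hi : ℝ} {u φ : ℝ → ℝ} (hτ : 0 < τ) (hA : 0 ≤ A)
    (hφ : ∀ t, φ t ∈ Icc 0 M) (hlo : lo ≤ 0) (hhi : τ * A * M / (1 + τ * M) ≤ hi)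
    (hu : ∀ t ∈ Icc a b, HasDerivAt u (-(1 / τ + φ t) * u t + A * φ t) t)
    (ha : u a ∈ Icc lo hi) : ∀ t ∈ Icc a b, u t ∈ Icc lo hi :=
  image_mem_Icc_of_hasDerivAt hu ha
    (fun t _ h => ltc_rate_nonneg hτ hA (hφ t).1 (h.trans hlo))
    (fun t _ h => ltc_rate_nonpos hτ hA (hφ t) (hhi.trans h))

theorem exists_hasDerivAt_ltcField {F : (ι → ℝ) → ι → ℝ} {M τ A : ℝ} (hF : ContDiff ℝ 1 F)
    (hFb : ∀ y i, F y i ∈ Icc 0 M) (hτ : 0 < τ) (hA : 0 ≤ A) {lo hi x₀ : ι → ℝ}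
    (hlo : lo ≤ 0) (hhi : ∀ i, τ * A * M / (1 + τ * M) ≤ hi i) (hx₀ : x₀ ∈ Icc lo hi) :
    ∃ X : ℝ → ι → ℝ, X 0 = x₀ ∧ ∀ t ≥ 0, HasDerivAt X (ltcField F τ A (X t)) t := by
  have hlohi : lo ≤ hi := hx₀.1.trans hx₀.2
  let clamp : (ι → ℝ) → ι → ℝ := fun y => lo ⊔ (y ⊓ hi)
  have hclamp_lip : LipschitzWith 1 clamp :=
    lipschitzWith_pi fun i => ((LipschitzWith.eval i).min_const (hi i)).const_max (lo i)
  obtain ⟨X, hX0, hX⟩ := exists_forall_hasDerivAt_comp_of_isCompact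
    (contDiff_ltcField hF τ A).locallyLipschitz isCompact_Icc hclamp_lip
    (fun y => ⟨le_sup_left, sup_le hlohi inf_le_right⟩) x₀
  have hbox : ∀ t ≥ 0, X t ∈ Icc lo hi := by
    intro t ht
    have hcoord (i : ι) : X t i ∈ Icc (lo i) (hi i) := by
      refine image_mem_Icc_of_hasDerivAt (a := 0) (b := t)
        (fun s _ => hasDerivAt_pi.1 (hX s) i) (by rw [hX0]; exact ⟨hx₀.1 i, hx₀.2 i⟩)
        (fun s _ h => ?_) (fun s _ h => ?_) t ⟨ht, le_rfl⟩
      · have : clamp (X s) i = lo i := max_eq_left (min_le_left _ _ |>.trans h)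
        simp only [ltcField, this]
        exact ltc_rate_nonneg hτ hA (hFb _ i).1 (hlo i)
      · have : clamp (X s) i = hi i := by
          simp only [clamp, Pi.sup_apply, Pi.inf_apply, min_eq_right h, max_eq_right (hlohi i)]
        simp only [ltcField, this]
        exact ltc_rate_nonpos hτ hA (hFb _ i) (hhi i)
    exact ⟨fun i => (hcoord i).1, fun i => (hcoord i).2⟩
  refine ⟨X, hX0, fun t ht => ?_⟩
  have : clamp (X t) = X t := by
    simp only [clamp, inf_eq_left.2 (hbox t ht).2, sup_eq_right.2 (hbox t ht).1]
  simpa [this] using hX t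

end LTC

/-- LTC boundedness and global existence (Lemma 5): for a bounded nonnegative
`C¹` field `F` with `0 ≤ F_i ≤ M`, `τ > 0`, `A ≥ 0`, every solution of
`ẋ_i = -(1/τ + F_i(x))x_i + A·F_i(x)` satisfies the coordinatewise bounds
`min(x_i(0), τAM/(1+τM), 0) ≤ x_i(t) ≤ max(x_i(0), τAM/(1+τM))` on its
domain, and there is a unique solution on `[0, ∞)` with `x(0) = x₀`. -/
theorem stmt_16 {n : ℕ} (F : (Fin n → ℝ) → (Fin n → ℝ)) (M τ A : ℝ)
    (hF : ContDiff ℝ 1 F)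
    (hFb : ∀ x : Fin n → ℝ, ∀ i, 0 ≤ F x i ∧ F x i ≤ M)
    (hτ : 0 < τ) (hA : 0 ≤ A) (x₀ : Fin n → ℝ) :
    (∀ (x : ℝ → Fin n → ℝ) (T : ℝ), 0 ≤ T → x 0 = x₀ →
      (∀ i, ∀ t ∈ Set.Icc (0 : ℝ) T,
        HasDerivAt (fun s => x s i)
          (-(1 / τ + F (x t) i) * x t i + A * F (x t) i) t) →
      ∀ i, ∀ t ∈ Set.Icc (0 : ℝ) T,
        min (min (x₀ i) (τ * A * M / (1 + τ * M))) 0 ≤ x t i ∧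
          x t i ≤ max (x₀ i) (τ * A * M / (1 + τ * M))) ∧
    (∃ x : ℝ → Fin n → ℝ,
      (x 0 = x₀ ∧ ∀ i, ∀ t ∈ Set.Ici (0 : ℝ),
        HasDerivAt (fun s => x s i)
          (-(1 / τ + F (x t) i) * x t i + A * F (x t) i) t) ∧
      ∀ y : ℝ → Fin n → ℝ,
        (y 0 = x₀ ∧ ∀ i, ∀ t ∈ Set.Ici (0 : ℝ),
          HasDerivAt (fun s => y s i)
            (-(1 / τ + F (y t) i) * y t i + A * F (y t) i) t) →
        Set.EqOn y x (Set.Ici 0)) := by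
  set c := τ * A * M / (1 + τ * M)
  set lo : Fin n → ℝ := fun i => min (min (x₀ i) c) 0
  set hi : Fin n → ℝ := fun i => max (x₀ i) c
  have hx₀ : x₀ ∈ Icc lo hi :=
    ⟨fun i => (min_le_left _ _).trans (min_le_left _ _), fun i => le_max_left _ _⟩
  have hbounds : ∀ (x : ℝ → Fin n → ℝ) (T : ℝ), x 0 = x₀ →
      (∀ i, ∀ t ∈ Icc (0 : ℝ) T, HasDerivAt (fun s => x s i) (ltcField F τ A (x t) i) t) →
      ∀ i, ∀ t ∈ Icc (0 : ℝ) T, x t i ∈ Icc (lo i) (hi i) := fun x T hx0 hx i =>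
    ltc_coord_mem_Icc hτ hA (fun t => hFb (x t) i) (min_le_right _ _) (le_max_right _ _) (hx i)
      (by rw [hx0]; exact ⟨hx₀.1 i, hx₀.2 i⟩)
  refine ⟨fun x T _ hx0 hx => hbounds x T hx0 hx, ?_⟩
  have hsol_mem : ∀ z : ℝ → Fin n → ℝ, z 0 = x₀ →
      (∀ i, ∀ t ∈ Ici (0 : ℝ), HasDerivAt (fun s => z s i) (ltcField F τ A (z t) i) t) →
      ∀ t ≥ 0, HasDerivAt z (ltcField F τ A (z t)) t ∧ z t ∈ Icc lo hi := by
    intro z hz0 hz t ht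
    have hmem := hbounds z t hz0 (fun i s hs => hz i s hs.1)
    exact ⟨hasDerivAt_pi.2 fun i => hz i t ht,
      fun i => (hmem i t ⟨ht, le_rfl⟩).1, fun i => (hmem i t ⟨ht, le_rfl⟩).2⟩
  obtain ⟨X, hX0, hX⟩ := exists_hasDerivAt_ltcField hF hFb hτ hA (fun i => min_le_right _ _)
    (fun i => le_max_right _ _) hx₀
  have hXsol : ∀ i, ∀ t ∈ Ici (0 : ℝ), HasDerivAt (fun s => X s i) (ltcField F τ A (X t) i) t :=
    fun i t ht => hasDerivAt_pi.1 (hX t ht) i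
  refine ⟨X, ⟨hX0, hXsol⟩, fun y ⟨hy0, hy⟩ => ?_⟩
  exact eqOn_Ici_of_locallyLipschitz (contDiff_ltcField hF τ A).locallyLipschitz isCompact_Icc
    (hsol_mem y hy0 hy) (hsol_mem X hX0 hXsol) (hy0.trans hX0.symm)
end
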